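/- arXiv:1805.08122 — 2 statements merged into one kernel-verified Lean document; each statement's English description precedes it below -/
import Mathlib

section
/- For an MDP with finite state and action spaces, any fixed β ∈ [0,1) and deterministic updates Q_{k+1} = T_β Q_k starting from bounded Q_0, the value sequence V_k(x) = max_a Q_k(x,a) satisfies V_{k+1}(x) − V_k(x) ≥ γ E_{x'∼P(·|x,π_k(x))}[V_k(x') − V_{k-1}(x')] for all k ≥ 1, where π_k(x) is any action achieving max_a Q_k(x,a). -/
open Finset

/-!
The gap term `β (max_b Q(x,b) − Q(x,a))` of `T_β` vanishes at a greedy action and is nonnegative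
elsewhere. Hence at the greedy action `π_k(x)`, `V_{k+1}(x) ≥ Q_{k+1}(x, π_k(x))` is the Bellman
backup of `V_k`, while `V_k(x) = Q_k(x, π_k(x))` is at most the Bellman backup of `V_{k-1}`;
the two backups are taken at the same action, so their difference is `γ E[V_k − V_{k-1}]`.
-/

section

variable {X A : Type*} [Fintype X]

def bellmanBackup (R : X → A → ℝ) (P : X → A → X → ℝ) (γ : ℝ) (V : X → ℝ) (x : X) (a : A) :
    ℝ :=
  R x a + γ * ∑ x', P x a x' * V x'

lemma bellmanBackup_sub (R : X → A → ℝ) (P : X → A → X → ℝ) (γ : ℝ) (V W : X → ℝ) (x : X)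
    (a : A) :
    bellmanBackup R P γ V x a - bellmanBackup R P γ W x a =
      γ * ∑ x', P x a x' * (V x' - W x') := by
  simp only [bellmanBackup, mul_sub, sum_sub_distrib]
  ring

/-- The operator `T_β`. -/
noncomputable def advantageLearning (R : X → A → ℝ) (P : X → A → X → ℝ) (γ β : ℝ)
    (Q : X → A → ℝ) (x : X) (a : A) : ℝ :=
  bellmanBackup R P γ (fun y => ⨆ b, Q y b) x a - β * ((⨆ b, Q x b) - Q x a)

section advantageLearning

variable (R : X → A → ℝ) (P : X → A → X → ℝ) (γ : ℝ) (Q : X → A → ℝ) {x : X} {a : A}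

lemma advantageLearning_of_greedy (β : ℝ) (ha : Q x a = ⨆ b, Q x b) :
    advantageLearning R P γ β Q x a = bellmanBackup R P γ (fun y => ⨆ b, Q y b) x a := by
  simp [advantageLearning, ha]

lemma advantageLearning_le_bellmanBackup [Finite A] {β : ℝ} (hβ : 0 ≤ β) :
    advantageLearning R P γ β Q x a ≤ bellmanBackup R P γ (fun y => ⨆ b, Q y b) x a := by
  have hgap : 0 ≤ (⨆ b, Q x b) - Q x a :=
    sub_nonneg.mpr (le_ciSup (Set.finite_range _).bddAbove a)
  unfold advantageLearning
  linarith [mul_nonneg hβ hgap]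

end advantageLearning

end

theorem value_recursion_robust_general
    {X A : Type*} [Fintype X] [Fintype A]
    (R : X → A → ℝ) (P : X → A → X → ℝ)
    (γ : ℝ)
    (β : ℝ) (hβ0 : 0 ≤ β)
    (Q : ℕ → X → A → ℝ)
    (hiter : ∀ k x a, Q (k + 1) x a =
      (R x a + γ * ∑ x', P x a x' * (⨆ b, Q k x' b))
        - β * ((⨆ b, Q k x b) - Q k x a))
    (π : ℕ → X → A) (hπ : ∀ k x, Q k x (π k x) = ⨆ a, Q k x a) :
    ∀ k, 1 ≤ k → ∀ x,
      (⨆ a, Q (k + 1) x a) - (⨆ a, Q k x a)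
        ≥ γ * ∑ x', P x (π k x) x' * ((⨆ a, Q k x' a) - ⨆ a, Q (k - 1) x' a) := by
  intro k hk x
  obtain ⟨m, rfl⟩ : ∃ m, k = m + 1 := ⟨k - 1, by omega⟩
  have hstep : ∀ n, Q (n + 1) = advantageLearning R P γ β (Q n) := fun n =>
    funext₂ (hiter n)
  have hnext : bellmanBackup R P γ (fun y => ⨆ b, Q (m + 1) y b) x (π (m + 1) x) ≤
      ⨆ a, Q (m + 1 + 1) x a := by
    rw [← advantageLearning_of_greedy R P γ _ β (hπ (m + 1) x), ← hstep]
    exact le_ciSup (Set.finite_range _).bddAbove _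
  have hcur : (⨆ a, Q (m + 1) x a) ≤
      bellmanBackup R P γ (fun y => ⨆ b, Q m y b) x (π (m + 1) x) := by
    rw [← hπ (m + 1) x, hstep]
    exact advantageLearning_le_bellmanBackup R P γ (Q m) hβ0
  rw [Nat.add_sub_cancel, ← bellmanBackup_sub]
  linarith

/-- For a finite MDP with fixed β ∈ [0,1) and deterministic updates
`Q_{k+1} = T_β Q_k`, the values `V_k(x) = max_a Q_k(x,a)` satisfy, for all `k ≥ 1`,
`V_{k+1}(x) − V_k(x) ≥ γ E_{x'∼P(·|x,π_k(x))}[V_k(x') − V_{k-1}(x')]`,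
where `π_k(x)` is any action achieving `max_a Q_k(x,a)`. -/
theorem value_recursion_robust
    {X A : Type*} [Fintype X] [Fintype A] [Nonempty X] [Nonempty A]
    (R : X → A → ℝ) (P : X → A → X → ℝ)
    (hPnonneg : ∀ x a x', 0 ≤ P x a x') (hPsum : ∀ x a, ∑ x', P x a x' = 1)
    (γ : ℝ) (hγ0 : 0 ≤ γ) (hγ1 : γ < 1)
    (β : ℝ) (hβ0 : 0 ≤ β) (hβ1 : β < 1)
    (Q : ℕ → X → A → ℝ)
    (hiter : ∀ k x a, Q (k + 1) x a =
      (R x a + γ * ∑ x', P x a x' * (⨆ b, Q k x' b))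
        - β * ((⨆ b, Q k x b) - Q k x a))
    (π : ℕ → X → A) (hπ : ∀ k x, Q k x (π k x) = ⨆ a, Q k x a) :
    ∀ k, 1 ≤ k → ∀ x,
      (⨆ a, Q (k + 1) x a) - (⨆ a, Q k x a)
        ≥ γ * ∑ x', P x (π k x) x' * ((⨆ a, Q k x' a) - ⨆ a, Q (k - 1) x' a) :=
  value_recursion_robust_general R P γ β hβ0 Q hiter π hπ
end

section
/- Consistency of the consistent Bellman operator with the Bellman operator on maximizing actions: for any Q and any (x,a) with Q(x,a) = max_b Q(x,b), T_C Q(x,a) = T_B Q(x,a), and in general T_C Q(x,a) ≤ T_B Q(x,a). -/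
open Finset

/-- The consistent Bellman operator agrees with the Bellman operator on
maximizing actions (`Q(x,a) = max_b Q(x,b)` implies `T_C Q(x,a) = T_B Q(x,a)`), and in
general `T_C Q(x,a) ≤ T_B Q(x,a)`. -/
theorem consistent_bellman_properties
    {X A : Type*} [Fintype X] [Fintype A] [Nonempty X] [Nonempty A] [DecidableEq X]
    (R : X → A → ℝ) (P : X → A → X → ℝ)
    (hPnonneg : ∀ x a x', 0 ≤ P x a x') (hPsum : ∀ x a, ∑ x', P x a x' = 1)
    (γ : ℝ) (hγ0 : 0 ≤ γ) (hγ1 : γ < 1)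
    (Q : X → A → ℝ) (x : X) (a : A) :
    (Q x a = (⨆ b, Q x b) →
      R x a + γ * ∑ x', P x a x' * (if x' = x then Q x a else ⨆ b, Q x' b)
        = R x a + γ * ∑ x', P x a x' * (⨆ b, Q x' b)) ∧
    R x a + γ * ∑ x', P x a x' * (if x' = x then Q x a else ⨆ b, Q x' b)
      ≤ R x a + γ * ∑ x', P x a x' * (⨆ b, Q x' b) := by
  constructor
  · intro h
    congr 1
    congr 1
    apply Finset.sum_congr rfl
    intro x' _
    by_cases hx : x' = x
    · subst hx; simp [h]
    · simp [hx]
  · have hle : ∀ x', P x a x' * (if x' = x then Q x a else ⨆ b, Q x' b)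
        ≤ P x a x' * (⨆ b, Q x' b) := by
      intro x'
      apply mul_le_mul_of_nonneg_left _ (hPnonneg x a x')
      by_cases hx : x' = x
      · subst hx; simp only [if_pos rfl]
        exact le_ciSup (Set.Finite.bddAbove (Set.finite_range _)) a
      · simp [hx]
    have := Finset.sum_le_sum (s := Finset.univ) (fun x' _ => hle x')
    have := mul_le_mul_of_nonneg_left this hγ0
    linarith
end
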